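/- Let E₀ be an elliptic curve over a number field M, let X₀ be an M-torsor of E₀, and let φ : E → (E₀)_{\bar K} be an isogeny over the algebraic closure. Then for every g ∈ Gal(\bar K / M), the covers g_*(E, φ) and (E, φ) are isomorphic as covers of the M-based curve E₀ if and only if they are isomorphic as covers of the M-based curve X₀. Consequently, the absolute field of moduli of φ with respect to the base E₀ equals its absolute field of moduli with respect to the base X₀. -/
import Mathlib


/-- Let `E₀` be an elliptic curve over a number field `M`, let `X₀` be
an `M`-torsor of `E₀`, and let `φ : E → (E₀)_{K̄}` be an isogeny over the algebraic
closure.  We work on `K̄`-points: `G = Gal(K̄/M)` acts on the group `E₀` of points of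
`E₀`; the torsor `X₀` is given by descent data `ρ_{X₀}(g) = ρ_{E₀}(g) + τ₀(g)` where
`τ₀ : G → E₀` is a 1-cocycle; `φ : E → E₀` is a surjective group homomorphism (with
finite kernel).  For `g ∈ G`, `Mor g` denotes the set of isomorphisms of curves
`g_*E → E` over `K̄` (written as maps on points, via a fixed identification of the
points of `g_*E` with those of `E`); it is stable under composing with translations of
`E`.  An isomorphism of covers `g_*(E, φ) → (E, φ)` over the `M`-based curve `E₀` is an
element `ρ ∈ Mor g` with `φ ∘ ρ = ψ g` (where `ψ g = ρ_{E₀}(g) ∘ g_*φ` on points), and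
over the `M`-based curve `X₀` it is an element `ρ ∈ Mor g` with `φ ∘ ρ = ψ g + τ₀ g`.
**Claim:** for every `g`, such isomorphisms exist for the base `E₀` iff they exist for
the base `X₀`; consequently the absolute field of moduli of `φ` with respect to the base
`E₀` coincides with the one with respect to the base `X₀`. -/
theorem isogeny_fieldOfModuli_torsor_base
    (G : Type) [Group G]
    (E E₀ : Type) [AddCommGroup E] [AddCommGroup E₀]
    [DistribMulAction G E₀]
    (φ : E →+ E₀) (hφ : Function.Surjective φ) (hker : Finite φ.ker)
    (τ₀ : G → E₀) (hτ₀ : ∀ g h : G, τ₀ (g * h) = g • τ₀ h + τ₀ g)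
    (Mor : G → Set (E → E))
    (hMor : ∀ g : G, ∀ ρ ∈ Mor g, ∀ t : E, (fun x => ρ x + t) ∈ Mor g)
    (hMor' : ∀ g : G, ∀ ρ ∈ Mor g, ∀ t : E, (fun x => ρ x - t) ∈ Mor g)
    (ψ : G → E → E₀) :
    ∀ g : G,
      ((∃ ρ ∈ Mor g, ∀ x, φ (ρ x) = ψ g x) ↔
        (∃ ρ ∈ Mor g, ∀ x, φ (ρ x) = ψ g x + τ₀ g)) := by
  intro g
  obtain ⟨τ, hτ⟩ := hφ (τ₀ g)
  constructor
  · rintro ⟨ρ, hρ, h⟩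
    exact ⟨fun x => ρ x + τ, hMor g ρ hρ τ, fun x => by simp [h x, hτ]⟩
  · rintro ⟨ρ, hρ, h⟩
    exact ⟨fun x => ρ x - τ, hMor' g ρ hρ τ, fun x => by simp [h x, hτ]⟩
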